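/- For every ω ∈ 𝒯, λ, h ≥ 0, b > 0 and every μ ∈ 𝒫 with Σ_x x μ(x) < ∞ and I(μ) < ∞, one has Q(μ) = b Σ_x x μ(x) + log Z(b,λ,h) − H̃(μ | μ_b^{λ,h}). -/

import Mathlib

open Filter Topology
open scoped BigOperators ENNReal

noncomputable section
namespace Copoly

/-- The number of elements of a finite type satisfying a predicate. -/
def cardOf {α : Type*} [Fintype α] (P : α → Prop) : ℕ :=
  (@Finset.filter _ P (Classical.decPred P) Finset.univ).card

/-- A single step of the simple random walk. -/
def step (b : Bool) : ℤ := if b then 1 else -1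

/-- The simple random walk path built from the increments `y`. -/
def walk (y : ℕ → Bool) (x : ℕ) : ℤ := ∑ i ∈ Finset.range x, step (y i)

/-- `sign (S x)`, with the convention `sign (S x) = sign (S (x-1))` when `S x = 0`. -/
def wsign (y : ℕ → Bool) : ℕ → ℤ
  | 0 => 1
  | x + 1 => if walk y (x + 1) = 0 then wsign y x else Int.sign (walk y (x + 1))

/-- Extension of a finite tuple of increments by `false`. -/
def ext {N : ℕ} (y : Fin N → Bool) : ℕ → Bool :=
  fun i => if h : i < N then y ⟨i, h⟩ else false

/-- The partition function `Z_{N,ω,λ,h} = E[exp (λ ∑_{x=1}^N (ω_x + h) sign (S_x))]`,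
written as the exact average over the `2^N` equally likely increment strings. -/
def Zpart (ω : ℕ → ℤ) (lam h : ℝ) (N : ℕ) : ℝ :=
  (1 / 2 : ℝ) ^ N * ∑ y : Fin N → Bool,
    Real.exp (lam * ∑ x ∈ Finset.Icc 1 N, ((ω x : ℝ) + h) * (wsign (ext y) x : ℝ))

/-- `ω` is centered and `2T`-periodic with `T ≥ 1`. -/
def IsPeriod (ω : ℕ → ℤ) (T : ℕ) : Prop :=
  0 < T ∧ (∀ x, ω (x + 2 * T) = ω x) ∧ ∑ x ∈ Finset.Icc 1 (2 * T), ω x = 0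

/-- The class `𝒯` of nontrivial centered periodic sequences with values in `{-1,1}`. -/
def memT (ω : ℕ → ℤ) : Prop :=
  (∀ x, ω x = 1 ∨ ω x = -1) ∧ (∃ T, IsPeriod ω T) ∧
    ¬ (∀ k : ℕ, 1 ≤ k → ω (2 * k - 1) * ω (2 * k) = -1)

/-- `T_ω`, the smallest (half-)period of `ω`. -/
def Tper (ω : ℕ → ℤ) : ℕ := sInf {T | IsPeriod ω T}

/-- The free energy `f_ω(λ,h)` (the limit defining it exists). -/
def freeEnergy (ω : ℕ → ℤ) (lam h : ℝ) : ℝ :=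
  limUnder atTop fun N : ℕ => Real.log (Zpart ω lam h N) / N

/-- `φ_ω(λ,h) = f_ω(λ,h) - λ h`. -/
def phiFE (ω : ℕ → ℤ) (lam h : ℝ) : ℝ := freeEnergy ω lam h - lam * h

/-- `ξ_{α,β} = ∑_{x=2a+1}^{2b} ω_x` for representatives `a ∈ α`, `b ∈ β` with `a < b`. -/
def xiM (T : ℕ) (ω : ℕ → ℤ) (α β : ZMod T) : ℤ :=
  ∑ x ∈ Finset.Icc (2 * α.val + 1)
      (2 * (if α.val < β.val then β.val else β.val + T)), ω x

/-- `K(x) = P(η = x)`, the law of the first return time to `0` of the walk. -/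
def Kret (x : ℕ) : ℝ :=
  if x = 0 then 0 else
    (1 / 2 : ℝ) ^ x * (cardOf fun y : Fin x → Bool =>
      walk (ext y) x = 0 ∧ ∀ z, 0 < z → z < x → walk (ext y) z ≠ 0 : ℕ)

/-- `p_{α,β} = P(η/2 ∈ β - α)`. -/
def pmat (T : ℕ) (α β : ZMod T) : ℝ :=
  ∑' n : ℕ, if (n : ZMod T) = β - α then Kret (2 * n) else 0

/-- `K_{α,β}(x) = P(η = x | η/2 ∈ β - α)`. -/
def Kcond (T : ℕ) (α β : ZMod T) (x : ℕ) : ℝ :=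
  if x % 2 = 0 ∧ ((x / 2 : ℕ) : ZMod T) = β - α then Kret x / pmat T α β else 0

/-- `Φ^{λ,h}_{α,β}(x) = log ((1 + exp (-2(λ ξ_{α,β} + λ h x)))/2)`. -/
def PhiM (T : ℕ) (ω : ℕ → ℤ) (lam h : ℝ) (α β : ZMod T) (x : ℕ) : ℝ :=
  Real.log ((1 + Real.exp (-2 * (lam * (xiM T ω α β : ℝ) + lam * h * x))) / 2)

/-- The matrix `A_{α,β}(b,λ,h)`. -/
def Amat (T : ℕ) (ω : ℕ → ℤ) (b lam h : ℝ) (α β : ZMod T) : ℝ :=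
  pmat T α β * ∑' x : ℕ, Kcond T α β x * Real.exp (PhiM T ω lam h α β x - b * x)

/-- The Perron–Frobenius eigenvalue of a matrix with positive entries: the unique
eigenvalue admitting a strictly positive eigenvector. -/
def PFeig {T : ℕ} (A : ZMod T → ZMod T → ℝ) : ℝ :=
  sSup {r : ℝ | ∃ v : ZMod T → ℝ, (∀ i, 0 < v i) ∧ ∀ i, (∑' j : ZMod T, A i j * v j) = r * v i}

/-- `Z(b,λ,h)`, the Perron–Frobenius eigenvalue of `A(b,λ,h)`. -/
def Zeig (T : ℕ) (ω : ℕ → ℤ) (b lam h : ℝ) : ℝ := PFeig (Amat T ω b lam h)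

open Classical in
/-- `b̃(λ,h)`: the unique `b > 0` solving `Z(b,λ,h) = 1` if it exists, and `0` otherwise. -/
def btilde (T : ℕ) (ω : ℕ → ℤ) (lam h : ℝ) : ℝ :=
  if hb : ∃ b > 0, Zeig T ω b lam h = 1 then hb.choose else 0

/-- The state space `𝕊 × 𝕊 × 2ℕ` (the last coordinate records the even excursion length). -/
abbrev Sp (T : ℕ) := ZMod T × ZMod T × ℕ

/-- First `𝕊`-marginal of `μ`. -/
def marg1 {T : ℕ} (μ : Sp T → ℝ) (α : ZMod T) : ℝ := ∑' q : ZMod T × ℕ, μ (α, q.1, q.2)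

/-- Second `𝕊`-marginal of `μ`. -/
def marg2 {T : ℕ} (μ : Sp T → ℝ) (β : ZMod T) : ℝ := ∑' q : ZMod T × ℕ, μ (q.1, β, q.2)

/-- The set `𝒫`: probability measures on `𝕊 × 𝕊 × 2ℕ` with equal `𝕊`-marginals,
supported on `{(α,β,x) : x ∈ 2ℕ, x/2 ∈ β - α}`. -/
def memP {T : ℕ} (μ : Sp T → ℝ) : Prop :=
  (∀ p, 0 ≤ μ p) ∧ HasSum μ 1 ∧
    (∀ p : Sp T, μ p ≠ 0 →
      p.2.2 % 2 = 0 ∧ 2 ≤ p.2.2 ∧ ((p.2.2 / 2 : ℕ) : ZMod T) = p.2.1 - p.1) ∧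
    ∀ γ, marg1 μ γ = marg2 μ γ

/-- The nonnegative summand `a log (a/c) - a + c` of relative entropy. -/
def klF (a c : ℝ) : ℝ := a * Real.log (a / c) - a + c

/-- Relative entropy `H(μ | ν) ∈ [0,∞]` of two probability measures on a countable space. -/
def Dkl {T : ℕ} (μ ν : Sp T → ℝ) : ℝ≥0∞ := ∑' p : Sp T, ENNReal.ofReal (klF (μ p) (ν p))

/-- The rate functional `I(μ) = ∑ μ(α,β,x) log (μ(α,β,x)/(μ(α) p_{α,β} K_{α,β}(x))) ∈ [0,∞]`. -/
def Ifun (T : ℕ) (μ : Sp T → ℝ) : ℝ≥0∞ :=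
  ∑' p : Sp T,
    ENNReal.ofReal (klF (μ p) (marg1 μ p.1 * pmat T p.1 p.2.1 * Kcond T p.1 p.2.1 p.2.2))

/-- `Q(μ) = ∑ Φ^{λ,h}_{α,β}(x) μ(α,β,x) - I(μ)`, with values in `[-∞,∞)`. -/
def Qfun (T : ℕ) (ω : ℕ → ℤ) (lam h : ℝ) (μ : Sp T → ℝ) : EReal :=
  ((∑' p : Sp T, PhiM T ω lam h p.1 p.2.1 p.2.2 * μ p : ℝ) : EReal) - (Ifun T μ : EReal)

/-- The measure `μ_b^{λ,h}(α,β,x) = π(α) p_{α,β} K_{α,β}(x) exp(Φ(x) - bx) v_β/(Z v_α)`. -/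
def muB (T : ℕ) (ω : ℕ → ℤ) (b lam h : ℝ) (π v : ZMod T → ℝ) (p : Sp T) : ℝ :=
  π p.1 * pmat T p.1 p.2.1 * Kcond T p.1 p.2.1 p.2.2 *
      Real.exp (PhiM T ω lam h p.1 p.2.1 p.2.2 - b * p.2.2) * v p.2.1 /
    (Zeig T ω b lam h * v p.1)

/-- `v` is a strictly positive right Perron–Frobenius eigenvector of `A(b,λ,h)` and `π` is
the probability left eigenvector (with eigenvalue 1) of the associated stochastic matrix
`(A_{α,β} v_β / (Z v_α))`. -/
def IsPF (T : ℕ) (ω : ℕ → ℤ) (b lam h : ℝ) (π v : ZMod T → ℝ) : Prop :=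
  (∀ i, 0 < v i) ∧
    (∀ i, (∑' j : ZMod T, Amat T ω b lam h i j * v j) = Zeig T ω b lam h * v i) ∧
    (∀ i, 0 ≤ π i) ∧ (∑' i : ZMod T, π i) = 1 ∧
    ∀ j, (∑' i : ZMod T, π i * (Amat T ω b lam h i j * v j / (Zeig T ω b lam h * v i))) = π j

/-- `H̃(μ | ν)`: the difference of relative entropies
`H(μ | ν) - H(μ_1 | ν_1)`, with values in `[-∞,∞]`. -/
def Htil {T : ℕ} (μ ν : Sp T → ℝ) : EReal :=
  (Dkl μ ν : EReal) - ((∑' α : ZMod T, klF (marg1 μ α) (marg1 ν α) : ℝ) : EReal)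

open Classical in
/-- `f(b) = ∑_{α,β,x} x μ_b^{λ,h}(α,β,x)` (defined through a choice of the
Perron–Frobenius data, on which it does not depend). -/
def fmean (T : ℕ) (ω : ℕ → ℤ) (b lam h : ℝ) : ℝ :=
  if hpf : ∃ w : (ZMod T → ℝ) × (ZMod T → ℝ), IsPF T ω b lam h w.1 w.2 then
    ∑' p : Sp T, (p.2.2 : ℝ) * muB T ω b lam h hpf.choose.1 hpf.choose.2 p
  else 0

/-- `Φ̂_{α,β}(x)` from the large-`λ` asymptotics. -/
def PhiHat (T : ℕ) (ω : ℕ → ℤ) (M : ℝ) (α β : ZMod T) (x : ℕ) : ℝ :=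
  -Real.log 2 +
    (if xiM T ω α β = -(x : ℤ) then Real.log (1 + Real.exp (2 * M * x)) else 0)

/-- `Ẑ(M)`, the Perron–Frobenius eigenvalue of `(p_{α,β} ∑_x K_{α,β}(x) exp (Φ̂_{α,β}(x)))`. -/
def Zhat (T : ℕ) (ω : ℕ → ℤ) (M : ℝ) : ℝ :=
  PFeig fun α β : ZMod T => pmat T α β * ∑' x : ℕ, Kcond T α β x * Real.exp (PhiHat T ω M α β x)

/-- The successive return times to `0` of the walk (`sInf ∅ = 0` on the irrelevant
event that the walk does not return). -/
def eta : ℕ → (ℕ → Bool) → ℕ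
  | 0, _ => 0
  | k + 1, y => sInf {x | eta k y < x ∧ walk y x = 0}

/-- Probability measures on `𝕊 × 𝕊 × 2ℕ`, with the topology of weak convergence
(= pointwise convergence on a countable discrete space). -/
abbrev PM (T : ℕ) := {μ : Sp T → ℝ // (∀ p, 0 ≤ μ p) ∧ HasSum μ 1}

/-- The empirical measure `L_m` of `{(α_j, β_j, Δη_j)}_{j<m}` along the path `y`. -/
def LmFun (T : ℕ) (m : ℕ) (y : ℕ → Bool) (p : Sp T) : ℝ :=
  (cardOf fun j : Fin m =>
      ((eta j.val y / 2 : ℕ) : ZMod T) = p.1 ∧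
        ((eta (j.val + 1) y / 2 : ℕ) : ZMod T) = p.2.1 ∧
        eta (j.val + 1) y - eta j.val y = p.2.2 : ℕ) / (m : ℝ)

open Classical in
/-- `P(L_m ∈ A)`: the probability that the `m`-th return to `0` occurs (at some time `n`)
and the empirical measure `L_m` belongs to `A`, written via cylinder sets. -/
def Pevent (T : ℕ) (A : Set (PM T)) (m : ℕ) : ℝ :=
  ∑' n : ℕ, (1 / 2 : ℝ) ^ n *
    (cardOf fun y : Fin n → Bool =>
      eta m (ext y) = n ∧ (∀ j, j < m → eta j (ext y) < eta (j + 1) (ext y)) ∧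
        ∃ hpm : (∀ p, 0 ≤ LmFun T m (ext y) p) ∧ HasSum (LmFun T m (ext y)) 1,
          (⟨LmFun T m (ext y), hpm⟩ : PM T) ∈ A : ℕ)

open Classical in
/-- The rate functional on probability measures: `I(μ)` if `μ ∈ 𝒫` and `+∞` otherwise. -/
def IfullPM {T : ℕ} (μ : PM T) : ℝ≥0∞ := if memP μ.1 then Ifun T μ.1 else ⊤

open Classical in
/-- `log` with values in `[-∞,∞)`: `elog r = -∞` for `r ≤ 0`. -/
def elog (r : ℝ) : EReal := if r ≤ 0 then ⊥ else ((Real.log r : ℝ) : EReal)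

/-- The space `(𝕊 × 2ℕ) × (𝕊 × 2ℕ)`. -/
abbrev W (T : ℕ) := (ZMod T × ℕ) × (ZMod T × ℕ)

/-- The transition kernel `q((α,x),(α',x')) = p_{α,α'} K_{α,α'}(x')`. -/
def qker (T : ℕ) (w w' : ZMod T × ℕ) : ℝ := pmat T w.1 w'.1 * Kcond T w.1 w'.1 w'.2

/-- First marginal of a measure on `(𝕊 × 2ℕ)²`. -/
def nu1 {T : ℕ} (ν : W T → ℝ) (w : ZMod T × ℕ) : ℝ := ∑' w' : ZMod T × ℕ, ν (w, w')

/-- Second marginal of a measure on `(𝕊 × 2ℕ)²`. -/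
def nu2 {T : ℕ} (ν : W T → ℝ) (w : ZMod T × ℕ) : ℝ := ∑' w' : ZMod T × ℕ, ν (w', w)

/-- `ν̂(α,β,x) = ∑_z ν(α,z,β,x)`. -/
def nuHat {T : ℕ} (ν : W T → ℝ) (p : Sp T) : ℝ := ∑' z : ℕ, ν ((p.1, z), (p.2.1, p.2.2))

open Classical in
/-- `Î(ν) = H(ν | ν₁ ⊗ q)` if the two marginals of `ν` coincide, `+∞` otherwise. -/
def Ihat {T : ℕ} (ν : W T → ℝ) : ℝ≥0∞ :=
  if ∀ w, nu1 ν w = nu2 ν w then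
    ∑' w : W T, ENNReal.ofReal (klF (ν w) (nu1 ν w.1 * qker T w.1 w.2))
  else ⊤

/-- Relative entropy `H(ν | ρ) ∈ [0,∞]` on `(𝕊 × 2ℕ)²`. -/
def DklW {T : ℕ} (ν ρ : W T → ℝ) : ℝ≥0∞ := ∑' w : W T, ENNReal.ofReal (klF (ν w) (ρ w))

/-- `μ̄((α,x),(α',x')) = (∑_γ μ(γ,α,x) / ∑_{γ,z} μ(γ,α,z)) μ(α,α',x')`
(with the convention that the value is `0` when the denominator vanishes). -/
def mubar {T : ℕ} (μ : Sp T → ℝ) (w : W T) : ℝ :=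
  ((∑' γ : ZMod T, μ (γ, w.1.1, w.1.2)) / marg2 μ w.1.1) * μ (w.1.1, w.2.1, w.2.2)

end Copoly

/-! With `ρ(α,β,x) = μ(α) p_{α,β} K_{α,β}(x)` the reference measure of `I`, on the support of `μ`
  `log (ρ / μ_b) = log μ(α) - log π(α) + log v_α - log v_β - Φ_{α,β}(x) + b x + log Z`.
Integrating against `μ`, the `v`-terms cancel since the two marginals of `μ` agree, the first two
terms give the relative entropy of the first marginal of `μ` to that of `μ_b`, which is `π`, and
the linear correction terms of the relative entropies cancel since `ρ` and `μ_b` both have mass 1.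
For `ρ` this is `∑_β p_{α,β} = 1`, the recurrence of the simple random walk, which follows from
the renewal equation for `u_N = P(S_{2N} = 0)` and `u_N ≥ 1/(2N)`. -/

section FiniteProduct

variable {σ τ : Type*} [Fintype σ]

lemma tsum_prod_fintype {f : σ × τ → ℝ} (hf : Summable f) :
    ∑' p, f p = ∑ a, ∑' t, f (a, t) := by
  rw [hf.tsum_prod, tsum_fintype]

lemma summable_prod_fintype_of_nonneg {f : σ × τ → ℝ} (hf : 0 ≤ f)
    (h : ∀ a, Summable fun t => f (a, t)) : Summable f :=
  (summable_prod_of_nonneg hf).mpr ⟨h, .of_finite⟩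

lemma Summable.mul_comp_of_finite {ι κ : Type*} [Finite κ] {f : ι → ℝ} (hf : Summable f)
    (g : ι → κ) (c : κ → ℝ) : Summable fun i => f i * c (g i) := by
  obtain ⟨C, hC⟩ := Finite.exists_le fun k => |c k|
  refine Summable.of_norm_bounded (hf.abs.mul_right C) fun i => ?_
  rw [Real.norm_eq_abs, abs_mul]
  exact mul_le_mul_of_nonneg_left (hC _) (abs_nonneg _)

end FiniteProduct

lemma summable_of_tsum_ofReal_ne_top {ι : Type*} {f : ι → ℝ} (hf : ∀ i, 0 ≤ f i)
    (h : ∑' i, ENNReal.ofReal (f i) ≠ ⊤) : Summable f :=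
  (NNReal.summable_coe.mpr (ENNReal.tsum_coe_ne_top_iff_summable.mp h)).congr fun i =>
    Real.coe_toNNReal _ (hf i)

lemma coe_tsum_ofReal_eq {ι : Type*} {f : ι → ℝ} (hf : ∀ i, 0 ≤ f i) (hs : Summable f) :
    ((∑' i, ENNReal.ofReal (f i) : ℝ≥0∞) : EReal) = ((∑' i, f i : ℝ) : EReal) := by
  rw [← ENNReal.ofReal_tsum_of_nonneg hf hs, EReal.coe_ennreal_ofReal,
    max_eq_left (tsum_nonneg hf)]

namespace Copoly

open Finset

section Walk

lemma walk_succ (y : ℕ → Bool) (x : ℕ) : walk y (x + 1) = walk y x + step (y x) :=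
  sum_range_succ _ _

lemma walk_congr {y y' : ℕ → Bool} {x : ℕ} (h : ∀ i < x, y i = y' i) :
    walk y x = walk y' x :=
  sum_congr rfl fun i hi => by rw [h i (mem_range.mp hi)]

lemma walk_add (y : ℕ → Bool) (a t : ℕ) :
    walk y (a + t) = walk y a + walk (fun j => y (a + j)) t :=
  sum_range_add _ a t

lemma even_walk_add (y : ℕ → Bool) (x : ℕ) : Even (walk y x + x) := by
  induction x with
  | zero => simp [walk]
  | succ n ih =>
    have hstep : Even (step (y n) + 1) := by cases y n <;> decide
    rw [walk_succ, Nat.cast_succ,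
      show walk y n + step (y n) + (n + 1) = walk y n + n + (step (y n) + 1) by ring]
    exact ih.add hstep

lemma even_of_walk_eq_zero {y : ℕ → Bool} {x : ℕ} (h : walk y x = 0) : Even x := by
  simpa [h] using even_walk_add y x

def IsFirstReturn (x : ℕ) (y : ℕ → Bool) : Prop :=
  walk y x = 0 ∧ ∀ z, 0 < z → z < x → walk y z ≠ 0

lemma IsFirstReturn.congr {x : ℕ} {y y' : ℕ → Bool} (h : ∀ i < x, y i = y' i)
    (hy : IsFirstReturn x y) : IsFirstReturn x y' :=
  ⟨walk_congr h ▸ hy.1, fun z hz hzx =>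
    walk_congr (fun i hi => h i (hi.trans hzx)) ▸ hy.2 z hz hzx⟩

lemma IsFirstReturn.eq {x x' : ℕ} {y : ℕ → Bool} (hx : 0 < x) (hx' : 0 < x')
    (h : IsFirstReturn x y) (h' : IsFirstReturn x' y) : x = x' := by
  by_contra hne
  rcases Nat.lt_or_gt_of_ne hne with hlt | hlt
  · exact h'.2 x hx hlt h.1
  · exact h.2 x' hx' hlt h'.1

lemma exists_isFirstReturn {y : ℕ → Bool} {N : ℕ} (hN : 1 ≤ N) (h0 : walk y (2 * N) = 0) :
    ∃ n ∈ Icc 1 N, IsFirstReturn (2 * n) y := by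
  classical
  have hex : ∃ z, 0 < z ∧ walk y z = 0 := ⟨2 * N, by omega, h0⟩
  obtain ⟨hpos, hzero⟩ := Nat.find_spec hex
  obtain ⟨n, hn⟩ := even_of_walk_eq_zero hzero
  have hle : Nat.find hex ≤ 2 * N := Nat.find_min' hex ⟨by omega, h0⟩
  refine ⟨n, mem_Icc.mpr ⟨by omega, by omega⟩, by rw [two_mul, ← hn]; exact hzero,
    fun z hz hzn hwz => ?_⟩
  have := Nat.find_min' hex ⟨hz, hwz⟩
  omega

end Walk

section Counting

lemma cardOf_eq_card_filter {α : Type*} [Fintype α] (P : α → Prop) [DecidablePred P] :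
    cardOf P = #(univ.filter P) := by
  rw [cardOf]
  exact congrArg card (filter_congr_decidable _ _ _)

lemma cardOf_le_pow {n : ℕ} (P : (Fin n → Bool) → Prop) : cardOf P ≤ 2 ^ n := by
  classical
  rw [cardOf_eq_card_filter]
  simpa using card_filter_le univ P

lemma cardOf_true (n : ℕ) : cardOf (fun _ : Fin n → Bool => True) = 2 ^ n := by
  classical
  simp [cardOf_eq_card_filter]

lemma ext_castAdd {n m : ℕ} (y : Fin (n + m) → Bool) {i : ℕ} (hi : i < n) :
    ext (fun j : Fin n => y (Fin.castAdd m j)) i = ext y i := by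
  simp [ext, hi, show i < n + m by omega]

lemma ext_natAdd {n m : ℕ} (y : Fin (n + m) → Bool) :
    (fun j => ext y (n + j)) = ext (fun j : Fin m => y (Fin.natAdd n j)) := by
  funext j
  by_cases hj : j < m <;> simp [ext, hj]

/-- A path of length `n + m` is a path of length `n` followed by a path of length `m`. -/
lemma cardOf_append {n m : ℕ} (P Q : (ℕ → Bool) → Prop)
    (hP : ∀ y y' : ℕ → Bool, (∀ i < n, y i = y' i) → P y → P y') :
    cardOf (fun y : Fin (n + m) → Bool => P (ext y) ∧ Q (fun j => ext y (n + j))) =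
      cardOf (fun y : Fin n → Bool => P (ext y)) *
        cardOf (fun y : Fin m → Bool => Q (ext y)) := by
  classical
  simp only [cardOf_eq_card_filter, ← card_product, ← filter_product]
  refine card_bij' (fun y _ => (fun i => y (Fin.castAdd m i), fun j => y (Fin.natAdd n j)))
    (fun z _ => Fin.append z.1 z.2) ?_ ?_ ?_ ?_
  · intro y hy
    simp only [mem_filter, mem_univ, true_and, mem_product] at hy ⊢
    exact ⟨hP _ _ (fun i hi => (ext_castAdd y hi).symm) hy.1, ext_natAdd y ▸ hy.2⟩
  · intro z hz
    simp only [mem_filter, mem_univ, true_and, mem_product] at hz ⊢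
    refine ⟨hP _ _ (fun i hi => ?_) hz.1, ?_⟩
    · rw [← ext_castAdd _ hi]; simp
    · rw [ext_natAdd]; simpa using hz.2
  · intro y _; simp [Fin.append_castAdd_natAdd]
  · intro z _; simp

def firstReturnCount (x : ℕ) : ℕ := cardOf fun y : Fin x → Bool => IsFirstReturn x (ext y)

def returnCount (x : ℕ) : ℕ := cardOf fun y : Fin x → Bool => walk (ext y) x = 0

/-- Decomposition of a path of length `2N` according to its first return time `2n`. -/
lemma sum_firstReturnCount_mul (N : ℕ) (Q : ℕ → (ℕ → Bool) → Prop) :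
    ∑ n ∈ Icc 1 N, firstReturnCount (2 * n) *
        cardOf (fun y : Fin (2 * (N - n)) → Bool => Q n (ext y)) =
      cardOf fun y : Fin (2 * N) → Bool =>
        ∃ n ∈ Icc 1 N, IsFirstReturn (2 * n) (ext y) ∧ Q n (fun j => ext y (2 * n + j)) := by
  classical
  have hU : univ.filter (fun y : Fin (2 * N) → Bool =>
        ∃ n ∈ Icc 1 N, IsFirstReturn (2 * n) (ext y) ∧ Q n (fun j => ext y (2 * n + j))) =
      (Icc 1 N).biUnion fun n => univ.filter fun y : Fin (2 * N) → Bool =>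
        IsFirstReturn (2 * n) (ext y) ∧ Q n (fun j => ext y (2 * n + j)) := by
    ext y; simp
  rw [cardOf_eq_card_filter, hU, card_biUnion]
  · refine sum_congr rfl fun n hn => ?_
    have hN : 2 * N = 2 * n + 2 * (N - n) := by rw [mem_Icc] at hn; omega
    rw [← cardOf_eq_card_filter, hN]
    exact (cardOf_append _ _ fun _ _ h hy => hy.congr h).symm
  · intro n hn n' hn' hne
    simp only [Function.onFun, disjoint_left, mem_filter, mem_univ, true_and]
    rintro y ⟨h, -⟩ ⟨h', -⟩
    rw [coe_Icc, Set.mem_Icc] at hn hn'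
    exact hne (by have := h.eq (by omega) (by omega) h'; omega)

lemma walk_eq_zero_iff_of_isFirstReturn {y : ℕ → Bool} {n N : ℕ} (hnN : n ≤ N)
    (hfr : IsFirstReturn (2 * n) y) :
    walk y (2 * N) = 0 ↔ walk (fun j => y (2 * n + j)) (2 * (N - n)) = 0 := by
  rw [show 2 * N = 2 * n + 2 * (N - n) by omega, walk_add, hfr.1, zero_add]

lemma returnCount_renewal {N : ℕ} (hN : 1 ≤ N) :
    returnCount (2 * N) =
      ∑ n ∈ Icc 1 N, firstReturnCount (2 * n) * returnCount (2 * (N - n)) := by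
  simp only [returnCount, sum_firstReturnCount_mul N fun n w => walk w (2 * (N - n)) = 0]
  congr 1
  funext y
  refine propext ⟨fun h0 => ?_, fun ⟨n, hn, hfr, h0⟩ =>
    (walk_eq_zero_iff_of_isFirstReturn (mem_Icc.mp hn).2 hfr).mpr h0⟩
  obtain ⟨n, hn, hfr⟩ := exists_isFirstReturn hN h0
  exact ⟨n, hn, hfr, (walk_eq_zero_iff_of_isFirstReturn (mem_Icc.mp hn).2 hfr).mp h0⟩

lemma sum_firstReturnCount_mul_pow_le (N : ℕ) :
    ∑ n ∈ Icc 1 N, firstReturnCount (2 * n) * 2 ^ (2 * (N - n)) ≤ 2 ^ (2 * N) := by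
  have hdec := sum_firstReturnCount_mul N fun _ _ => True
  simp only [cardOf_true] at hdec
  rw [hdec]
  exact cardOf_le_pow _

lemma centralBinom_le_returnCount (N : ℕ) : N.centralBinom ≤ returnCount (2 * N) := by
  classical
  rw [returnCount, cardOf_eq_card_filter, Nat.centralBinom_eq_two_mul_choose,
    ← card_fin (2 * N), ← card_powersetCard, card_fin]
  refine card_le_card_of_injOn (fun s i => decide (i ∈ s)) (fun s hs => ?_)
    (fun s _ t _ hst => by ext i; simpa using congrFun hst i)
  rw [mem_coe, mem_powersetCard] at hs
  simp only [coe_filter, mem_univ, true_and, Set.mem_ofPred_eq]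
  have hstep : ∀ i : Fin (2 * N),
      step (decide (i ∈ s)) = 2 * (if i ∈ s then 1 else 0) - 1 := by
    intro i; by_cases h : i ∈ s <;> simp [step, h]
  rw [walk, sum_range fun i => step (ext _ i)]
  simp only [ext, Fin.is_lt, dif_pos, Fin.eta, hstep, sum_sub_distrib, ← mul_sum, sum_boole,
    sum_const, card_univ, Fintype.card_fin]
  simp [hs.2]

end Counting

section Recurrence

lemma sum_range_succ_eq_add_sum_Icc {M : Type*} [AddCommMonoid M] (f : ℕ → M) (N : ℕ) :
    ∑ n ∈ range (N + 1), f n = f 0 + ∑ n ∈ Icc 1 N, f n := by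
  rw [show range (N + 1) = insert 0 (Icc 1 N) by ext; simp; omega, sum_insert (by simp)]

/-- A renewal sequence `u` with defect `1 - ∑ f > 0` has `∑ u ≤ 1 / (1 - ∑ f)`. -/
lemma one_le_tsum_of_renewal {f u : ℕ → ℝ} (hf : ∀ n, 0 ≤ f n) (hfs : Summable f)
    (hu : ∀ n, 0 ≤ u n) (hu0 : u 0 = 1)
    (hren : ∀ N, 1 ≤ N → u N = ∑ n ∈ Icc 1 N, f n * u (N - n)) (hdiv : ¬ Summable u) :
    1 ≤ ∑' n, f n := by
  by_contra! hF
  set F := ∑' n, f n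
  have hshift : ∀ n M, ∑ N ∈ Icc n M, u (N - n) ≤ ∑ N ∈ range (M + 1), u N := by
    intro n M
    rw [← Finset.Ico_add_one_right_eq_Icc, sum_Ico_eq_sum_range]
    simp only [Nat.add_sub_cancel_left]
    exact sum_le_sum_of_subset_of_nonneg (range_subset_range.mpr (by omega)) fun i _ _ => hu i
  have hpartial : ∀ M, ∑ N ∈ range (M + 1), u N ≤ 1 + F * ∑ N ∈ range (M + 1), u N := by
    intro M
    suffices h : ∑ N ∈ Icc 1 M, u N ≤ F * ∑ N ∈ range (M + 1), u N by
      linarith [sum_range_succ_eq_add_sum_Icc u M]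
    calc ∑ N ∈ Icc 1 M, u N = ∑ N ∈ Icc 1 M, ∑ n ∈ Icc 1 N, f n * u (N - n) :=
          sum_congr rfl fun N hN => hren N (mem_Icc.mp hN).1
      _ = ∑ n ∈ Icc 1 M, ∑ N ∈ Icc n M, f n * u (N - n) :=
          sum_comm' fun N n => by simp only [mem_Icc]; omega
      _ ≤ ∑ n ∈ Icc 1 M, f n * ∑ N ∈ range (M + 1), u N :=
          sum_le_sum fun n _ => by
            rw [← mul_sum]; exact mul_le_mul_of_nonneg_left (hshift n M) (hf n)
      _ ≤ F * ∑ N ∈ range (M + 1), u N := by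
          rw [← sum_mul]
          exact mul_le_mul_of_nonneg_right (hfs.sum_le_tsum _ fun n _ => hf n)
            (sum_nonneg fun N _ => hu N)
  refine hdiv (summable_of_sum_range_le (c := 1 / (1 - F)) hu fun M => ?_)
  calc ∑ N ∈ range M, u N ≤ ∑ N ∈ range (M + 1), u N := by
        rw [sum_range_succ]; linarith [hu M]
    _ ≤ 1 / (1 - F) := by
        rw [le_div_iff₀ (by linarith)]
        nlinarith [hpartial M]

lemma Kret_zero : Kret 0 = 0 := if_pos rfl

lemma Kret_of_ne_zero {x : ℕ} (hx : x ≠ 0) : Kret x = (1 / 2) ^ x * firstReturnCount x := by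
  rw [Kret, if_neg hx]; rfl

lemma Kret_nonneg (x : ℕ) : 0 ≤ Kret x := by
  rw [Kret]; split_ifs <;> positivity

lemma Kret_two_mul_pos {n : ℕ} (hn : 1 ≤ n) : 0 < Kret (2 * n) := by
  classical
  have hwalk : ∀ x ≤ 2 * n, walk (ext fun i : Fin (2 * n) => decide (i.val < n)) x =
      if x ≤ n then (x : ℤ) else 2 * n - x := by
    intro x hx
    induction x with
    | zero => simp [walk]
    | succ m ih =>
      rw [walk_succ, ih (by omega)]
      simp only [ext, show m < 2 * n by omega, dif_pos, step, decide_eq_true_eq]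
      by_cases h : m < n
      · simp [h, show m ≤ n by omega, show m + 1 ≤ n by omega]
      · simp only [h, if_false, show ¬ m + 1 ≤ n by omega]
        split_ifs <;> push_cast <;> omega
  have hcount : 0 < firstReturnCount (2 * n) := by
    rw [firstReturnCount, cardOf_eq_card_filter, card_pos]
    refine ⟨fun i => decide (i.val < n), mem_filter.mpr ⟨mem_univ _, ?_, fun z hz hzn => ?_⟩⟩
    · rw [hwalk _ le_rfl, if_neg (by omega)]; push_cast; ring
    · rw [hwalk z hzn.le]; split_ifs <;> omega
  rw [Kret_of_ne_zero (by omega)]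
  positivity

def returnProb (N : ℕ) : ℝ := (1 / 2) ^ (2 * N) * returnCount (2 * N)

lemma returnProb_nonneg (N : ℕ) : 0 ≤ returnProb N := by
  rw [returnProb]; positivity

lemma returnProb_zero : returnProb 0 = 1 := by
  simp [returnProb, returnCount, cardOf, walk]

lemma returnProb_renewal {N : ℕ} (hN : 1 ≤ N) :
    returnProb N = ∑ n ∈ Icc 1 N, Kret (2 * n) * returnProb (N - n) := by
  rw [returnProb, returnCount_renewal hN, Nat.cast_sum, mul_sum]
  refine sum_congr rfl fun n hn => ?_
  rw [mem_Icc] at hn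
  rw [Kret_of_ne_zero (by omega), returnProb, show 2 * N = 2 * n + 2 * (N - n) by omega,
    pow_add, Nat.cast_mul]
  ring

lemma sum_Icc_Kret_two_mul_le_one (N : ℕ) : ∑ n ∈ Icc 1 N, Kret (2 * n) ≤ 1 := by
  have hterm : ∀ n ∈ Icc 1 N, Kret (2 * n) =
      (1 / 2) ^ (2 * N) * ((firstReturnCount (2 * n) * 2 ^ (2 * (N - n)) : ℕ) : ℝ) := by
    intro n hn
    rw [mem_Icc] at hn
    rw [Kret_of_ne_zero (by omega), show 2 * N = 2 * n + 2 * (N - n) by omega, pow_add]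
    push_cast
    rw [mul_comm _ ((2 : ℝ) ^ _), mul_assoc, ← mul_assoc _ (2 ^ _), ← mul_pow]
    norm_num
  rw [sum_congr rfl hterm, ← mul_sum, ← Nat.cast_sum]
  calc (1 / 2 : ℝ) ^ (2 * N) *
        ((∑ n ∈ Icc 1 N, firstReturnCount (2 * n) * 2 ^ (2 * (N - n)) : ℕ) : ℝ)
      ≤ (1 / 2) ^ (2 * N) * ((2 ^ (2 * N) : ℕ) : ℝ) := by
        gcongr; exact sum_firstReturnCount_mul_pow_le N
    _ = 1 := by push_cast; rw [← mul_pow]; norm_num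

lemma sum_range_Kret_two_mul_le_one (N : ℕ) : ∑ n ∈ range N, Kret (2 * n) ≤ 1 := by
  calc ∑ n ∈ range N, Kret (2 * n) ≤ ∑ n ∈ range (N + 1), Kret (2 * n) := by
        rw [sum_range_succ]; linarith [Kret_nonneg (2 * N)]
    _ ≤ 1 := by
        rw [sum_range_succ_eq_add_sum_Icc, mul_zero, Kret_zero, zero_add]
        exact sum_Icc_Kret_two_mul_le_one N

lemma summable_Kret_two_mul : Summable fun n => Kret (2 * n) :=
  summable_of_sum_range_le (fun _ => Kret_nonneg _) sum_range_Kret_two_mul_le_one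

lemma one_div_le_two_mul_returnProb (N : ℕ) : 1 / (N : ℝ) ≤ 2 * returnProb N := by
  rcases Nat.eq_zero_or_pos N with rfl | hN
  · simp [returnProb_zero]
  have hbinom : (4 : ℝ) ^ N ≤ 2 * N * returnCount (2 * N) := by
    have h := Nat.four_pow_le_two_mul_self_mul_centralBinom N hN
    have h' := centralBinom_le_returnCount N
    calc (4 : ℝ) ^ N ≤ 2 * N * N.centralBinom := by exact_mod_cast h
      _ ≤ 2 * N * returnCount (2 * N) := by gcongr
  rw [returnProb, pow_mul, div_le_iff₀ (by positivity)]
  calc (1 : ℝ) = ((1 / 2) ^ 2) ^ N * 4 ^ N := by rw [← mul_pow]; norm_num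
    _ ≤ ((1 / 2) ^ 2) ^ N * (2 * N * returnCount (2 * N)) := by gcongr
    _ = _ := by ring

lemma not_summable_returnProb : ¬ Summable returnProb := fun h =>
  Real.not_summable_one_div_natCast <| (h.mul_left 2).of_nonneg_of_le
    (fun N => by positivity) one_div_le_two_mul_returnProb

/-- Recurrence of the simple random walk. -/
theorem tsum_Kret_two_mul : ∑' n, Kret (2 * n) = 1 :=
  le_antisymm
    (Real.tsum_le_of_sum_range_le (fun _ => Kret_nonneg _) sum_range_Kret_two_mul_le_one)
    (one_le_tsum_of_renewal (fun _ => Kret_nonneg _) summable_Kret_two_mul returnProb_nonneg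
      returnProb_zero (fun _ => returnProb_renewal) not_summable_returnProb)

end Recurrence

section Excursions

variable {T : ℕ}

lemma exists_natCast_eq [NeZero T] (γ : ZMod T) : ∃ n : ℕ, 1 ≤ n ∧ (n : ZMod T) = γ :=
  ⟨γ.val + T, by have := NeZero.pos T; omega, by simp⟩

def Knum (T : ℕ) (α β : ZMod T) (x : ℕ) : ℝ :=
  if x % 2 = 0 ∧ ((x / 2 : ℕ) : ZMod T) = β - α then Kret x else 0

lemma Knum_two_mul (α β : ZMod T) (n : ℕ) :
    Knum T α β (2 * n) = if (n : ZMod T) = β - α then Kret (2 * n) else 0 := by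
  simp [Knum]

lemma Knum_two_mul_add_one (α β : ZMod T) (n : ℕ) : Knum T α β (2 * n + 1) = 0 := by
  simp [Knum, Nat.add_mod]

lemma Knum_nonneg (α β : ZMod T) (x : ℕ) : 0 ≤ Knum T α β x := by
  rw [Knum]; split_ifs <;> simp [Kret_nonneg]

lemma summable_Knum_two_mul (α β : ZMod T) : Summable fun n => Knum T α β (2 * n) :=
  summable_Kret_two_mul.of_nonneg_of_le (fun n => Knum_nonneg α β _) fun n => by
    rw [Knum_two_mul]; split_ifs <;> simp [Kret_nonneg]

lemma summable_Knum (α β : ZMod T) : Summable (Knum T α β) :=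
  (summable_Knum_two_mul α β).even_add_odd (by simp [Knum_two_mul_add_one])

lemma tsum_Knum (α β : ZMod T) : ∑' x, Knum T α β x = pmat T α β := by
  rw [← tsum_even_add_odd (summable_Knum_two_mul α β) (by simp [Knum_two_mul_add_one])]
  simp [Knum_two_mul_add_one, Knum_two_mul, pmat]

lemma pmat_nonneg (α β : ZMod T) : 0 ≤ pmat T α β :=
  tsum_Knum α β ▸ tsum_nonneg (Knum_nonneg α β)

lemma pmat_pos [NeZero T] (α β : ZMod T) : 0 < pmat T α β := by
  obtain ⟨n, hn, hcast⟩ := exists_natCast_eq (β - α)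
  rw [← tsum_Knum]
  refine lt_of_lt_of_le ?_ ((summable_Knum α β).le_tsum (2 * n) fun x _ => Knum_nonneg α β x)
  rw [Knum_two_mul, if_pos hcast]
  exact Kret_two_mul_pos hn

lemma sum_pmat [NeZero T] (α : ZMod T) : ∑ β, pmat T α β = 1 := by
  have hsummand : ∀ β : ZMod T,
      Summable fun n : ℕ => if (n : ZMod T) = β - α then Kret (2 * n) else 0 := fun β => by
    simpa only [Knum_two_mul] using summable_Knum_two_mul α β
  have hfiber : ∀ n : ℕ, ∑ β : ZMod T, (if (n : ZMod T) = β - α then Kret (2 * n) else 0) =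
      Kret (2 * n) := fun n => by
    rw [sum_eq_single (α + n) (fun β _ hβ => if_neg fun h => hβ (by rw [h]; ring)) (by simp),
      if_pos (by ring)]
  simp only [pmat]
  rw [← Summable.tsum_finsetSum fun β _ => hsummand β, tsum_congr hfiber, tsum_Kret_two_mul]

lemma Kcond_eq_Knum_div (α β : ZMod T) (x : ℕ) :
    Kcond T α β x = Knum T α β x / pmat T α β := by
  rw [Kcond, Knum]; split_ifs <;> simp

lemma Kcond_nonneg (α β : ZMod T) (x : ℕ) : 0 ≤ Kcond T α β x := by
  rw [Kcond_eq_Knum_div]; exact div_nonneg (Knum_nonneg α β x) (pmat_nonneg α β)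

lemma summable_Kcond (α β : ZMod T) : Summable (Kcond T α β) := by
  rw [show Kcond T α β = fun x => Knum T α β x / pmat T α β from
    funext (Kcond_eq_Knum_div α β)]
  exact (summable_Knum α β).div_const _

lemma tsum_Kcond [NeZero T] (α β : ZMod T) : ∑' x, Kcond T α β x = 1 := by
  simp only [Kcond_eq_Knum_div]
  rw [tsum_div_const, tsum_Knum, div_self (pmat_pos α β).ne']

lemma Kcond_pos [NeZero T] {α β : ZMod T} {x : ℕ} (hx2 : x % 2 = 0) (hx : 2 ≤ x)
    (hcl : ((x / 2 : ℕ) : ZMod T) = β - α) : 0 < Kcond T α β x := by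
  rw [Kcond, if_pos ⟨hx2, hcl⟩, show x = 2 * (x / 2) by omega]
  exact div_pos (Kret_two_mul_pos (by omega)) (pmat_pos α β)

end Excursions

section Weights

variable {T : ℕ} (ω : ℕ → ℤ)

lemma abs_log_one_add_exp_neg_div_two_le (z : ℝ) :
    |Real.log ((1 + Real.exp (-z)) / 2)| ≤ |z| := by
  have hw : 0 < (1 + Real.exp (-z)) / 2 := by positivity
  have h1 : Real.exp (-|z|) ≤ 1 := Real.exp_le_one_iff.mpr (neg_nonpos.mpr (abs_nonneg z))
  have h2 : Real.exp (-|z|) ≤ Real.exp (-z) := Real.exp_le_exp.mpr (neg_le_neg (le_abs_self z))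
  have h3 : 1 ≤ Real.exp |z| := Real.one_le_exp_iff.mpr (abs_nonneg z)
  have h4 : Real.exp (-z) ≤ Real.exp |z| := Real.exp_le_exp.mpr (neg_le_abs z)
  rw [abs_le, Real.le_log_iff_exp_le hw, Real.log_le_iff_le_exp hw]
  constructor <;> linarith

lemma abs_PhiM_le (lam h : ℝ) (α β : ZMod T) (x : ℕ) :
    |PhiM T ω lam h α β x| ≤ 2 * |lam * xiM T ω α β| + 2 * |lam * h| * x := by
  refine (neg_mul (2 : ℝ) _ ▸ abs_log_one_add_exp_neg_div_two_le _).trans ?_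
  rw [abs_mul, abs_two]
  have := abs_add_le (lam * xiM T ω α β) (lam * h * x)
  rw [abs_mul (lam * h), Nat.abs_cast] at this
  linarith

variable {ω}

lemma exp_PhiM_sub_le {lam h b : ℝ} (hlam : 0 ≤ lam) (hh : 0 ≤ h) (hb : 0 ≤ b)
    (α β : ZMod T) (x : ℕ) :
    Real.exp (PhiM T ω lam h α β x - b * x) ≤
      (1 + Real.exp (-2 * (lam * xiM T ω α β))) / 2 := by
  rw [Real.exp_sub, PhiM, Real.exp_log (by positivity)]
  calc (1 + Real.exp (-2 * (lam * xiM T ω α β + lam * h * x))) / 2 / Real.exp (b * x)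
      ≤ (1 + Real.exp (-2 * (lam * xiM T ω α β + lam * h * x))) / 2 :=
        div_le_self (by positivity) (Real.one_le_exp_iff.mpr (by positivity))
    _ ≤ (1 + Real.exp (-2 * (lam * xiM T ω α β))) / 2 := by
        have := mul_nonneg (mul_nonneg hlam hh) (Nat.cast_nonneg (α := ℝ) x)
        gcongr (1 + Real.exp ?_) / 2
        linarith

lemma summable_Kcond_mul_exp {lam h b : ℝ} (hlam : 0 ≤ lam) (hh : 0 ≤ h) (hb : 0 ≤ b)
    (α β : ZMod T) :
    Summable fun x => Kcond T α β x * Real.exp (PhiM T ω lam h α β x - b * x) :=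
  ((summable_Kcond α β).mul_right
      ((1 + Real.exp (-2 * (lam * xiM T ω α β))) / 2)).of_nonneg_of_le
    (fun x => mul_nonneg (Kcond_nonneg α β x) (Real.exp_pos _).le)
    fun x => mul_le_mul_of_nonneg_left (exp_PhiM_sub_le hlam hh hb α β x) (Kcond_nonneg α β x)

lemma Amat_pos [NeZero T] {lam h b : ℝ} (hlam : 0 ≤ lam) (hh : 0 ≤ h) (hb : 0 ≤ b)
    (α β : ZMod T) : 0 < Amat T ω b lam h α β := by
  obtain ⟨n, hn, hcast⟩ := exists_natCast_eq (β - α)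
  have hterm :
      0 < Kcond T α β (2 * n) * Real.exp (PhiM T ω lam h α β (2 * n) - b * (2 * n : ℕ)) :=
    mul_pos (Kcond_pos (by omega) (by omega) (by simpa using hcast)) (Real.exp_pos _)
  refine mul_pos (pmat_pos α β) (hterm.trans_le ?_)
  exact (summable_Kcond_mul_exp hlam hh hb α β).le_tsum _
    fun x _ => mul_nonneg (Kcond_nonneg α β x) (Real.exp_pos _).le

end Weights

section Marginals

variable {T : ℕ} {μ : Sp T → ℝ}

lemma tsum_Sp [NeZero T] {f : Sp T → ℝ} (hf : Summable f) :
    ∑' p, f p = ∑ α, ∑ β, ∑' x, f (α, β, x) := by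
  rw [tsum_prod_fintype hf]
  exact sum_congr rfl fun α _ => tsum_prod_fintype (hf.prod_factor α)

lemma summable_Sp_of_nonneg [NeZero T] {f : Sp T → ℝ} (hf : 0 ≤ f)
    (h : ∀ α β, Summable fun x => f (α, β, x)) : Summable f :=
  summable_prod_fintype_of_nonneg hf fun α =>
    summable_prod_fintype_of_nonneg (fun _ => hf _) (h α)

lemma hasSum_mul_fst [NeZero T] (hμ : Summable μ) (c : ZMod T → ℝ) :
    HasSum (fun p => μ p * c p.1) (∑ α, marg1 μ α * c α) := by
  have hs := hμ.mul_comp_of_finite Prod.fst c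
  rw [hs.hasSum_iff, tsum_prod_fintype hs]
  exact sum_congr rfl fun α _ => by rw [marg1, ← tsum_mul_right]

/-- Exchanging the two `𝕊`-coordinates turns `marg2` into `marg1`. -/
def swapSp (T : ℕ) : Sp T ≃ Sp T where
  toFun p := (p.2.1, p.1, p.2.2)
  invFun p := (p.2.1, p.1, p.2.2)
  left_inv _ := rfl
  right_inv _ := rfl

lemma hasSum_mul_snd [NeZero T] (hμ : Summable μ) (c : ZMod T → ℝ) :
    HasSum (fun p => μ p * c p.2.1) (∑ β, marg2 μ β * c β) := by
  rw [← (swapSp T).hasSum_iff]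
  exact hasSum_mul_fst ((swapSp T).summable_iff.mpr hμ) c

lemma sum_marg1 [NeZero T] {a : ℝ} (hμ : HasSum μ a) : ∑ α, marg1 μ α = a := by
  have h1 := hasSum_mul_fst hμ.summable fun _ => (1 : ℝ)
  simp only [mul_one] at h1
  exact h1.unique hμ

lemma le_marg1 (hμ : Summable μ) (hμ0 : 0 ≤ μ) (p : Sp T) : μ p ≤ marg1 μ p.1 :=
  (hμ.prod_factor p.1).le_tsum p.2 fun _ _ => hμ0 _

end Marginals

section PerronFrobenius

variable {T : ℕ} {ω : ℕ → ℤ} {b lam h : ℝ} {π v : ZMod T → ℝ}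

lemma IsPF.Zeig_pos [NeZero T] (hpf : IsPF T ω b lam h π v) (hlam : 0 ≤ lam) (hh : 0 ≤ h)
    (hb : 0 ≤ b) : 0 < Zeig T ω b lam h := by
  have heig := hpf.2.1 0
  rw [tsum_fintype] at heig
  refine pos_of_mul_pos_left (heig ▸ sum_pos (fun j _ => ?_) univ_nonempty) (hpf.1 0).le
  exact mul_pos (Amat_pos hlam hh hb 0 j) (hpf.1 j)

lemma IsPF.pi_pos [NeZero T] (hpf : IsPF T ω b lam h π v) (hlam : 0 ≤ lam) (hh : 0 ≤ h)
    (hb : 0 ≤ b) (j : ZMod T) : 0 < π j := by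
  have hZ := hpf.Zeig_pos hlam hh hb
  obtain ⟨hv, -, hπ0, hπ1, hstat⟩ := hpf
  rw [tsum_fintype] at hπ1
  obtain ⟨i, -, hi⟩ := exists_lt_of_sum_lt (f := fun _ => (0 : ℝ)) (g := π) (s := univ)
    (by rw [hπ1, sum_const_zero]; exact one_pos)
  have hP : ∀ i, 0 < Amat T ω b lam h i j * v j / (Zeig T ω b lam h * v i) := fun i =>
    div_pos (mul_pos (Amat_pos hlam hh hb i j) (hv j)) (mul_pos hZ (hv i))
  rw [← hstat j, tsum_fintype]
  exact sum_pos' (fun i _ => mul_nonneg (hπ0 i) (hP i).le) ⟨i, mem_univ _, mul_pos hi (hP i)⟩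

lemma tsum_muB_fiber (α β : ZMod T) :
    ∑' x, muB T ω b lam h π v (α, β, x) =
      π α * (Amat T ω b lam h α β * v β) / (Zeig T ω b lam h * v α) := by
  calc ∑' x, muB T ω b lam h π v (α, β, x)
      = ∑' x, π α * pmat T α β * v β / (Zeig T ω b lam h * v α) *
          (Kcond T α β x * Real.exp (PhiM T ω lam h α β x - b * x)) :=
        tsum_congr fun x => by rw [muB]; ring
    _ = _ := by rw [tsum_mul_left, Amat]; ring

lemma IsPF.muB_nonneg [NeZero T] (hpf : IsPF T ω b lam h π v) (hlam : 0 ≤ lam) (hh : 0 ≤ h)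
    (hb : 0 ≤ b) : 0 ≤ muB T ω b lam h π v := fun p => by
  have := hpf.Zeig_pos hlam hh hb
  have := hpf.pi_pos hlam hh hb p.1
  have := hpf.1 p.1
  have := hpf.1 p.2.1
  have := pmat_nonneg p.1 p.2.1
  have := Kcond_nonneg p.1 p.2.1 p.2.2
  rw [muB]
  positivity

lemma IsPF.summable_muB [NeZero T] (hpf : IsPF T ω b lam h π v) (hlam : 0 ≤ lam) (hh : 0 ≤ h)
    (hb : 0 ≤ b) : Summable (muB T ω b lam h π v) := by
  refine summable_Sp_of_nonneg (hpf.muB_nonneg hlam hh hb) fun α β => ?_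
  refine ((summable_Kcond_mul_exp (ω := ω) hlam hh hb α β).mul_left
    (π α * pmat T α β * v β / (Zeig T ω b lam h * v α))).congr fun x => ?_
  rw [muB]; ring

lemma IsPF.marg1_muB [NeZero T] (hpf : IsPF T ω b lam h π v) (hlam : 0 ≤ lam) (hh : 0 ≤ h)
    (hb : 0 ≤ b) (α : ZMod T) : marg1 (muB T ω b lam h π v) α = π α := by
  have hZv : Zeig T ω b lam h * v α ≠ 0 := (mul_pos (hpf.Zeig_pos hlam hh hb) (hpf.1 α)).ne'
  have heig := hpf.2.1 α
  rw [tsum_fintype] at heig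
  rw [marg1, tsum_prod_fintype ((hpf.summable_muB hlam hh hb).prod_factor α)]
  simp only [tsum_muB_fiber]
  rw [← sum_div, ← mul_sum, heig, mul_div_assoc, div_self hZv, mul_one]

lemma IsPF.sum_pi [NeZero T] (hpf : IsPF T ω b lam h π v) : ∑ α, π α = 1 := by
  rw [← hpf.2.2.2.1, tsum_fintype]

lemma IsPF.hasSum_muB [NeZero T] (hpf : IsPF T ω b lam h π v) (hlam : 0 ≤ lam) (hh : 0 ≤ h)
    (hb : 0 ≤ b) : HasSum (muB T ω b lam h π v) 1 := by
  have hs := hpf.summable_muB hlam hh hb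
  have hmarg := sum_marg1 hs.hasSum
  simp only [hpf.marg1_muB hlam hh hb, hpf.sum_pi] at hmarg
  exact hmarg ▸ hs.hasSum

end PerronFrobenius

section RelativeEntropy

lemma klF_zero_left (c : ℝ) : klF 0 c = c := by simp [klF]

lemma klF_nonneg {a c : ℝ} (ha : 0 ≤ a) (hc : 0 ≤ c) (h : a ≠ 0 → 0 < c) : 0 ≤ klF a c := by
  rcases ha.eq_or_lt with rfl | ha
  · rwa [klF_zero_left]
  have hc := h ha.ne'
  have hlog := mul_le_mul_of_nonneg_left (Real.one_sub_inv_le_log_of_pos (div_pos ha hc)) ha.le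
  rw [inv_div, mul_sub, mul_one, mul_div_cancel₀ _ ha.ne'] at hlog
  rw [klF]
  linarith

lemma klF_eq_mul_log_sub {a c : ℝ} (hc : 0 < c) :
    klF a c = a * (Real.log a - Real.log c) - a + c := by
  rcases eq_or_ne a 0 with rfl | ha
  · simp [klF]
  · rw [klF, Real.log_div ha hc.ne']

lemma klF_eq_klF_add {a c₁ c₂ : ℝ} (h : a ≠ 0 → 0 < c₁ ∧ 0 < c₂) :
    klF a c₂ = klF a c₁ + a * (Real.log c₁ - Real.log c₂) + c₂ - c₁ := by
  rcases eq_or_ne a 0 with rfl | ha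
  · simp [klF_zero_left]
  · obtain ⟨hc₁, hc₂⟩ := h ha
    rw [klF_eq_mul_log_sub hc₁, klF_eq_mul_log_sub hc₂]
    ring

end RelativeEntropy

section RateFunction

variable {T : ℕ} {μ : Sp T → ℝ}

def rateRef (T : ℕ) (μ : Sp T → ℝ) (p : Sp T) : ℝ :=
  marg1 μ p.1 * pmat T p.1 p.2.1 * Kcond T p.1 p.2.1 p.2.2

lemma memP.marg1_pos (hμ : memP μ) {p : Sp T} (hp : μ p ≠ 0) : 0 < marg1 μ p.1 :=
  (lt_of_le_of_ne (hμ.1 p) (Ne.symm hp)).trans_le (le_marg1 hμ.2.1.summable hμ.1 p)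

lemma memP.Kcond_pos [NeZero T] (hμ : memP μ) {p : Sp T} (hp : μ p ≠ 0) :
    0 < Kcond T p.1 p.2.1 p.2.2 :=
  let ⟨h2, hx, hcl⟩ := hμ.2.2.1 p hp
  Copoly.Kcond_pos h2 hx hcl

lemma memP.rateRef_pos [NeZero T] (hμ : memP μ) {p : Sp T} (hp : μ p ≠ 0) :
    0 < rateRef T μ p :=
  mul_pos (mul_pos (hμ.marg1_pos hp) (pmat_pos _ _)) (hμ.Kcond_pos hp)

lemma rateRef_nonneg (hμ0 : 0 ≤ μ) (p : Sp T) : 0 ≤ rateRef T μ p :=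
  mul_nonneg (mul_nonneg (tsum_nonneg fun _ => hμ0 _) (pmat_nonneg _ _)) (Kcond_nonneg _ _ _)

lemma memP.hasSum_rateRef [NeZero T] (hμ : memP μ) : HasSum (rateRef T μ) 1 := by
  have hfiber : ∀ α β, HasSum (fun x => rateRef T μ (α, β, x)) (marg1 μ α * pmat T α β) :=
    fun α β => by
      have := ((summable_Kcond α β).mul_left (marg1 μ α * pmat T α β)).hasSum
      rw [tsum_mul_left, tsum_Kcond, mul_one] at this
      exact this
  have hs : Summable (rateRef T μ) :=
    summable_Sp_of_nonneg (rateRef_nonneg hμ.1) fun α β => (hfiber α β).summable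
  refine hs.hasSum_iff.mpr ?_
  simp only [tsum_Sp hs, (hfiber _ _).tsum_eq, ← mul_sum, sum_pmat, mul_one]
  exact sum_marg1 hμ.2.1

lemma summable_PhiM_mul [NeZero T] (ω : ℕ → ℤ) (lam h : ℝ) (hμ : Summable μ)
    (hmean : Summable fun p : Sp T => (p.2.2 : ℝ) * μ p) :
    Summable fun p : Sp T => PhiM T ω lam h p.1 p.2.1 p.2.2 * μ p := by
  refine Summable.of_norm_bounded ((hμ.abs.mul_comp_of_finite (fun p : Sp T => (p.1, p.2.1))
    fun q => 2 * |lam * xiM T ω q.1 q.2|).add (hmean.abs.mul_left (2 * |lam * h|))) fun p => ?_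
  rw [Real.norm_eq_abs, abs_mul, abs_mul (p.2.2 : ℝ), Nat.abs_cast]
  nlinarith [abs_PhiM_le ω lam h p.1 p.2.1 p.2.2, abs_nonneg (μ p)]

end RateFunction

section Identity

variable {T : ℕ} [NeZero T] {ω : ℕ → ℤ} {b lam h : ℝ} {π v : ZMod T → ℝ} {μ : Sp T → ℝ}

lemma IsPF.muB_pos (hpf : IsPF T ω b lam h π v) (hlam : 0 ≤ lam) (hh : 0 ≤ h) (hb : 0 ≤ b)
    (hμ : memP μ) {p : Sp T} (hp : μ p ≠ 0) : 0 < muB T ω b lam h π v p := by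
  have := hpf.Zeig_pos hlam hh hb
  have := hpf.pi_pos hlam hh hb p.1
  have := hpf.1 p.1
  have := hpf.1 p.2.1
  have := pmat_pos (T := T) p.1 p.2.1
  have := hμ.Kcond_pos hp
  rw [muB]
  positivity

lemma IsPF.log_rateRef_sub_log_muB (hpf : IsPF T ω b lam h π v) (hlam : 0 ≤ lam) (hh : 0 ≤ h)
    (hb : 0 ≤ b) (hμ : memP μ) {p : Sp T} (hp : μ p ≠ 0) :
    Real.log (rateRef T μ p) - Real.log (muB T ω b lam h π v p) =
      Real.log (marg1 μ p.1) - Real.log (π p.1) + (Real.log (v p.1) - Real.log (v p.2.1)) -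
        PhiM T ω lam h p.1 p.2.1 p.2.2 + b * p.2.2 + Real.log (Zeig T ω b lam h) := by
  have hZ := (hpf.Zeig_pos hlam hh hb).ne'
  have hπ := (hpf.pi_pos hlam hh hb p.1).ne'
  have hv₁ := (hpf.1 p.1).ne'
  have hv₂ := (hpf.1 p.2.1).ne'
  have hm := (hμ.marg1_pos hp).ne'
  have hpm := (pmat_pos (T := T) p.1 p.2.1).ne'
  have hK := (hμ.Kcond_pos hp).ne'
  simp only [rateRef, muB]
  rw [Real.log_mul (mul_ne_zero hm hpm) hK, Real.log_mul hm hpm,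
    Real.log_div (by positivity) (mul_ne_zero hZ hv₁), Real.log_mul hZ hv₁,
    Real.log_mul (by positivity) hv₂, Real.log_mul (by positivity) (Real.exp_pos _).ne',
    Real.log_exp, Real.log_mul (mul_ne_zero hπ hpm) hK, Real.log_mul hπ hpm]
  ring

lemma IsPF.klF_muB_eq (hpf : IsPF T ω b lam h π v) (hlam : 0 ≤ lam) (hh : 0 ≤ h) (hb : 0 ≤ b)
    (hμ : memP μ) (p : Sp T) :
    klF (μ p) (muB T ω b lam h π v p) = klF (μ p) (rateRef T μ p) +
      μ p * (Real.log (marg1 μ p.1) - Real.log (π p.1) + (Real.log (v p.1) - Real.log (v p.2.1)) -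
        PhiM T ω lam h p.1 p.2.1 p.2.2 + b * p.2.2 + Real.log (Zeig T ω b lam h)) +
      muB T ω b lam h π v p - rateRef T μ p := by
  rw [klF_eq_klF_add fun hp => ⟨hμ.rateRef_pos hp, hpf.muB_pos hlam hh hb hμ hp⟩]
  rcases eq_or_ne (μ p) 0 with hp | hp
  · simp [hp]
  · rw [hpf.log_rateRef_sub_log_muB hlam hh hb hμ hp]

lemma IsPF.hasSum_klF_muB (hpf : IsPF T ω b lam h π v) (hlam : 0 ≤ lam) (hh : 0 ≤ h)
    (hb : 0 ≤ b) (hμ : memP μ) (hmean : Summable fun p : Sp T => (p.2.2 : ℝ) * μ p)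
    (hI : Summable fun p => klF (μ p) (rateRef T μ p)) :
    HasSum (fun p => klF (μ p) (muB T ω b lam h π v p))
      ((∑' p, klF (μ p) (rateRef T μ p)) +
        ∑ α, marg1 μ α * (Real.log (marg1 μ α) - Real.log (π α)) -
        ∑' p : Sp T, PhiM T ω lam h p.1 p.2.1 p.2.2 * μ p + b * ∑' p : Sp T, (p.2.2 : ℝ) * μ p +
        Real.log (Zeig T ω b lam h)) := by
  have hμ₁ : HasSum μ 1 := hμ.2.1
  have hent := hasSum_mul_fst hμ₁.summable fun α => Real.log (marg1 μ α) - Real.log (π α)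
  have hv₁ := hasSum_mul_fst hμ₁.summable fun α => Real.log (v α)
  have hv₂ := hasSum_mul_snd hμ₁.summable fun β => Real.log (v β)
  simp only [← hμ.2.2.2] at hv₂
  have hΦ := (summable_PhiM_mul ω lam h hμ₁.summable hmean).hasSum
  have hsum := (((((hI.hasSum.add hent).add (hv₁.sub hv₂)).sub hΦ).add
    (hmean.hasSum.mul_left b)).add (hμ₁.mul_left (Real.log (Zeig T ω b lam h)))).add
    ((hpf.hasSum_muB hlam hh hb).sub hμ.hasSum_rateRef)
  convert hsum using 1
  · rfl
  · funext p
    rw [hpf.klF_muB_eq hlam hh hb hμ p]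
    ring
  · ring

lemma IsPF.tsum_klF_marg1_muB (hpf : IsPF T ω b lam h π v) (hlam : 0 ≤ lam) (hh : 0 ≤ h)
    (hb : 0 ≤ b) (hμ : memP μ) :
    ∑' α, klF (marg1 μ α) (marg1 (muB T ω b lam h π v) α) =
      ∑ α, marg1 μ α * (Real.log (marg1 μ α) - Real.log (π α)) := by
  rw [tsum_fintype]
  simp only [hpf.marg1_muB hlam hh hb, klF_eq_mul_log_sub (hpf.pi_pos hlam hh hb _)]
  rw [sum_add_distrib, sum_sub_distrib, sum_marg1 hμ.2.1, hpf.sum_pi]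
  ring

end Identity

lemma Tper_pos {ω : ℕ → ℤ} (hω : memT ω) : 0 < Tper ω :=
  (Nat.sInf_mem hω.2.1).1

lemma Ifun_eq (T : ℕ) (μ : Sp T → ℝ) :
    Ifun T μ = ∑' p, ENNReal.ofReal (klF (μ p) (rateRef T μ p)) := rfl

/-- equation (2.10): for `μ ∈ 𝒫` with finite mean and `I(μ) < ∞`,
`Q(μ) = b ∑_x x μ(x) + log Z(b,λ,h) - H̃(μ | μ_b^{λ,h})`. -/
theorem stmt11 (ω : ℕ → ℤ) (hω : memT ω) (lam h : ℝ) (hlam : 0 ≤ lam) (hh : 0 ≤ h)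
    (b : ℝ) (hb : 0 < b) (π v : ZMod (Tper ω) → ℝ)
    (hpf : IsPF (Tper ω) ω b lam h π v)
    (μ : Sp (Tper ω) → ℝ) (hμ : memP μ)
    (hsum : Summable fun p : Sp (Tper ω) => (p.2.2 : ℝ) * μ p)
    (hI : Ifun (Tper ω) μ ≠ ⊤) :
    Qfun (Tper ω) ω lam h μ =
      ((b * (∑' p : Sp (Tper ω), (p.2.2 : ℝ) * μ p) +
          Real.log (Zeig (Tper ω) ω b lam h) : ℝ) : EReal) -
        Htil μ (muB (Tper ω) ω b lam h π v) := by
  have : NeZero (Tper ω) := ⟨(Tper_pos hω).ne'⟩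
  have hI₀ : ∀ p, 0 ≤ klF (μ p) (rateRef _ μ p) := fun p =>
    klF_nonneg (hμ.1 p) (rateRef_nonneg hμ.1 p) hμ.rateRef_pos
  have hD₀ : ∀ p, 0 ≤ klF (μ p) (muB _ ω b lam h π v p) := fun p =>
    klF_nonneg (hμ.1 p) (hpf.muB_nonneg hlam hh hb.le p) (hpf.muB_pos hlam hh hb.le hμ)
  have hIs := summable_of_tsum_ofReal_ne_top hI₀ (Ifun_eq _ μ ▸ hI)
  have hD := hpf.hasSum_klF_muB hlam hh hb.le hμ hsum hIs
  rw [Qfun, Htil, Ifun_eq, Dkl, coe_tsum_ofReal_eq hI₀ hIs, coe_tsum_ofReal_eq hD₀ hD.summable,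
    hD.tsum_eq, hpf.tsum_klF_marg1_muB hlam hh hb.le hμ, ← EReal.coe_sub, ← EReal.coe_sub,
    ← EReal.coe_sub, EReal.coe_eq_coe_iff]
  ring

end Copoly
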